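/- The map sending a canonical tuple (i, j, k, ℓ, m), where N_1 > i ≥ j ≥ 0, N_2 > k ≥ ℓ ≥ 0, and N_3 > m ≥ 0, to the position (s_2(i) + s_1(j)) · s_2(N_2) · N_3 + (s_2(k) + s_1(ℓ)) · N_3 + m is a bijection onto {0, ..., s_2(N_1) · s_2(N_2) · N_3 − 1}. -/
import Mathlib


lemma Tsucc (n : ℕ) : (n+1)*(n+1+1)/2 = n*(n+1)/2 + (n+1) := by
  have h : (n+1)*(n+1+1) = n*(n+1) + 2*(n+1) := by ring
  rw [h, Nat.add_mul_div_left _ _ (by norm_num : (0:ℕ) < 2)]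

lemma Tmono {a b : ℕ} (h : a ≤ b) : a*(a+1)/2 ≤ b*(b+1)/2 :=
  Nat.div_le_div_right (Nat.mul_le_mul h (by omega))

lemma tri_bound {i j N : ℕ} (hj : j ≤ i) (hi : i < N) :
    i*(i+1)/2 + j < N*(N+1)/2 := by
  have h1 := Tsucc i
  have h2 := Tmono (show i+1 ≤ N from hi)
  set x := i*(i+1)/2
  set u := (i+1)*(i+1+1)/2
  set y := N*(N+1)/2
  omega

lemma tri_surj : ∀ N n : ℕ, n < N*(N+1)/2 → ∃ i j, j ≤ i ∧ i < N ∧ i*(i+1)/2 + j = n := by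
  intro N
  induction N with
  | zero => intro n h; simp at h
  | succ N ih =>
    intro n h
    by_cases hn : n < N*(N+1)/2
    · obtain ⟨i, j, h1, h2, h3⟩ := ih n hn
      exact ⟨i, j, h1, Nat.lt_succ_of_lt h2, h3⟩
    · have h1 := Tsucc N
      refine ⟨N, n - N*(N+1)/2, ?_, Nat.lt_succ_self N, ?_⟩ <;> omega

lemma tri_inj {i j i' j' : ℕ} (hj : j ≤ i) (hj' : j' ≤ i')
    (h : i*(i+1)/2 + j = i'*(i'+1)/2 + j') : i = i' ∧ j = j' := by
  have key : ∀ a b a' b' : ℕ, b ≤ a → b' ≤ a' → a < a' →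
      a*(a+1)/2 + b = a'*(a'+1)/2 + b' → False := by
    intro a b a' b' hb hb' hlt he
    have h1 := Tsucc a
    have h2 := Tmono (show a+1 ≤ a' from hlt)
    set x := a*(a+1)/2
    set u := (a+1)*(a+1+1)/2
    set y := a'*(a'+1)/2
    omega
  have hii : i = i' := by
    rcases Nat.lt_trichotomy i i' with hl | he | hl
    · exact absurd (key i j i' j' hj hj' hl h) (by simp)
    · exact he
    · exact absurd (key i' j' i j hj' hj hl h.symm) (by simp)
  subst hii
  exact ⟨rfl, by omega⟩

lemma split_unique {D a a' r r' : ℕ} (hr : r < D) (hr' : r' < D)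
    (h : a*D + r = a'*D + r') : a = a' ∧ r = r' := by
  have key : ∀ a b a' b' : ℕ, b < D → a < a' → a*D + b < a'*D + b' := by
    intro a b a' b' hb hlt
    calc a*D + b < a*D + D := Nat.add_lt_add_left hb _
      _ = (a+1)*D := by ring
      _ ≤ a'*D := Nat.mul_le_mul_right _ hlt
      _ ≤ a'*D + b' := Nat.le_add_right _ _
  have ha : a = a' := by
    rcases Nat.lt_trichotomy a a' with hl | he | hl
    · exact absurd h (Nat.ne_of_lt (key a r a' r' hr hl))
    · exact he
    · exact absurd h.symm (Nat.ne_of_lt (key a' r' a r hr' hl))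
  subst ha
  exact ⟨rfl, by omega⟩
/-- For a 5-dimensional tensor with `{{1,2},{3,4},{5}}` symmetry, the map
`(i,j,k,ℓ,m) ↦ (s₂(i)+s₁(j))·s₂(N₂)·N₃ + (s₂(k)+s₁(ℓ))·N₃ + m` is a bijection
from canonical tuples onto `{0, ..., s₂(N₁)·s₂(N₂)·N₃ - 1}`. -/
theorem stmt_7 (N₁ N₂ N₃ : ℕ) :
    Set.BijOn
      (fun t : ℕ × ℕ × ℕ × ℕ × ℕ =>
        (t.1 * (t.1 + 1) / 2 + t.2.1) * (N₂ * (N₂ + 1) / 2) * N₃ +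
          (t.2.2.1 * (t.2.2.1 + 1) / 2 + t.2.2.2.1) * N₃ + t.2.2.2.2)
      {t : ℕ × ℕ × ℕ × ℕ × ℕ |
        t.2.1 ≤ t.1 ∧ t.1 < N₁ ∧ t.2.2.2.1 ≤ t.2.2.1 ∧ t.2.2.1 < N₂ ∧
          t.2.2.2.2 < N₃}
      (Set.Iio (N₁ * (N₁ + 1) / 2 * (N₂ * (N₂ + 1) / 2) * N₃)) := by
  set T₁ := N₁ * (N₁ + 1) / 2 with hT₁
  set T₂ := N₂ * (N₂ + 1) / 2 with hT₂
  have bound : ∀ a b m : ℕ, a < T₁ → b < T₂ → m < N₃ →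
      a * T₂ * N₃ + b * N₃ + m < T₁ * T₂ * N₃ := by
    intro a b m ha hb hm
    have h1 : b * N₃ + m < T₂ * N₃ :=
      calc b * N₃ + m < b * N₃ + N₃ := Nat.add_lt_add_left hm _
        _ = (b + 1) * N₃ := by ring
        _ ≤ T₂ * N₃ := Nat.mul_le_mul_right _ hb
    calc a * T₂ * N₃ + b * N₃ + m = a * (T₂ * N₃) + (b * N₃ + m) := by ring
      _ < a * (T₂ * N₃) + T₂ * N₃ := Nat.add_lt_add_left h1 _
      _ = (a + 1) * (T₂ * N₃) := by ring
      _ ≤ T₁ * (T₂ * N₃) := Nat.mul_le_mul_right _ ha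
      _ = T₁ * T₂ * N₃ := by ring
  refine ⟨?_, ?_, ?_⟩
  · rintro ⟨i, j, k, l, m⟩ ⟨hji, hiN, hlk, hkN, hm⟩
    exact bound _ _ _ (tri_bound hji hiN) (tri_bound hlk hkN) hm
  · rintro ⟨i, j, k, l, m⟩ ⟨hji, hiN, hlk, hkN, hm⟩
      ⟨i', j', k', l', m'⟩ ⟨hji', hiN', hlk', hkN', hm'⟩ h
    simp only [Prod.mk.injEq]
    have ha : i*(i+1)/2 + j < T₁ := tri_bound hji hiN
    have ha' : i'*(i'+1)/2 + j' < T₁ := tri_bound hji' hiN'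
    have hb : k*(k+1)/2 + l < T₂ := tri_bound hlk hkN
    have hb' : k'*(k'+1)/2 + l' < T₂ := tri_bound hlk' hkN'
    have hr : (k*(k+1)/2 + l) * N₃ + m < T₂ * N₃ :=
      calc (k*(k+1)/2 + l) * N₃ + m < (k*(k+1)/2 + l) * N₃ + N₃ := Nat.add_lt_add_left hm _
        _ = (k*(k+1)/2 + l + 1) * N₃ := by ring
        _ ≤ T₂ * N₃ := Nat.mul_le_mul_right _ hb
    have hr' : (k'*(k'+1)/2 + l') * N₃ + m' < T₂ * N₃ :=
      calc (k'*(k'+1)/2 + l') * N₃ + m' < (k'*(k'+1)/2 + l') * N₃ + N₃ := Nat.add_lt_add_left hm' _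
        _ = (k'*(k'+1)/2 + l' + 1) * N₃ := by ring
        _ ≤ T₂ * N₃ := Nat.mul_le_mul_right _ hb'
    have h' : (i*(i+1)/2 + j) * (T₂ * N₃) + ((k*(k+1)/2 + l) * N₃ + m)
        = (i'*(i'+1)/2 + j') * (T₂ * N₃) + ((k'*(k'+1)/2 + l') * N₃ + m') := by
      have := h
      simp only at this
      calc (i*(i+1)/2 + j) * (T₂ * N₃) + ((k*(k+1)/2 + l) * N₃ + m)
          = (i*(i+1)/2 + j) * T₂ * N₃ + (k*(k+1)/2 + l) * N₃ + m := by ring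
        _ = (i'*(i'+1)/2 + j') * T₂ * N₃ + (k'*(k'+1)/2 + l') * N₃ + m' := this
        _ = (i'*(i'+1)/2 + j') * (T₂ * N₃) + ((k'*(k'+1)/2 + l') * N₃ + m') := by ring
    obtain ⟨hA, hR⟩ := split_unique hr hr' h'
    obtain ⟨hB, hM⟩ := split_unique hm hm' hR
    obtain ⟨hi, hj⟩ := tri_inj hji hji' hA
    obtain ⟨hk, hl⟩ := tri_inj hlk hlk' hB
    exact ⟨hi, hj, hk, hl, hM⟩
  · rintro n (hn : n < T₁ * T₂ * N₃)
    have hpos : 0 < T₂ * N₃ := by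
      rcases Nat.eq_zero_or_pos (T₂ * N₃) with h0 | h
      · rw [mul_assoc, h0, mul_zero] at hn; omega
      · exact h
    have hN₃ : 0 < N₃ := by
      rcases Nat.eq_zero_or_pos N₃ with h0 | h
      · rw [h0, mul_zero] at hpos; omega
      · exact h
    set a := n / (T₂ * N₃) with hadef
    set r := n % (T₂ * N₃) with hrdef
    have hnar : a * (T₂ * N₃) + r = n := by
      rw [hadef, hrdef, Nat.mul_comm]; exact Nat.div_add_mod n (T₂ * N₃)
    have ha : a < T₁ := by
      rw [hadef, Nat.div_lt_iff_lt_mul hpos]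
      calc n < T₁ * T₂ * N₃ := hn
        _ = T₁ * (T₂ * N₃) := by ring
    have hrlt : r < T₂ * N₃ := Nat.mod_lt _ hpos
    set b := r / N₃ with hbdef
    set m := r % N₃ with hmdef
    have hrbm : b * N₃ + m = r := by
      rw [hbdef, hmdef, Nat.mul_comm]; exact Nat.div_add_mod r N₃
    have hb : b < T₂ := by
      rw [hbdef, Nat.div_lt_iff_lt_mul hN₃]
      calc r < T₂ * N₃ := hrlt
        _ = T₂ * N₃ := by ring
    have hm : m < N₃ := Nat.mod_lt _ hN₃
    obtain ⟨i, j, hji, hiN, hij⟩ := tri_surj N₁ a ha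
    obtain ⟨k, l, hlk, hkN, hkl⟩ := tri_surj N₂ b hb
    refine ⟨(i, j, k, l, m), ⟨hji, hiN, hlk, hkN, hm⟩, ?_⟩
    show (i*(i+1)/2 + j) * T₂ * N₃ + (k*(k+1)/2 + l) * N₃ + m = n
    rw [hij, hkl]
    calc a * T₂ * N₃ + b * N₃ + m = a * (T₂ * N₃) + (b * N₃ + m) := by ring
      _ = a * (T₂ * N₃) + r := by rw [hrbm]
      _ = n := hnar
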